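/- Let W be a channel from X to Z such that for every x ∈ X and every probability distribution P on X with P(x) = 0, ‖W_x − ∑_y P(y)·W_y‖₁ ≥ η. If x^n, y^n ∈ X^n have Hamming distance d_H(x^n, y^n) ≥ σ·n, then with ε = σ²η/(2|X|²|Z|) one has W^n_{y^n}(T^n_{W,ε}(x^n)) ≤ 2·exp(−n·ε⁴/2). -/

import Mathlib

open Classical Finset

/-- number of occurrences of the letter `x` in the word `xn` -/
noncomputable def Ncount {X : Type*} [Fintype X] {n : ℕ} (xn : Fin n → X) (x : X) : ℕ :=
  (univ.filter (fun i => xn i = x)).card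

/-- number of positions carrying the pair `(x,z)` in the pair of words `(xn, zn)` -/
noncomputable def Ncount2 {X Z : Type*} [Fintype X] [Fintype Z] {n : ℕ}
    (xn : Fin n → X) (zn : Fin n → Z) (x : X) (z : Z) : ℕ :=
  (univ.filter (fun i => xn i = x ∧ zn i = z)).card

/-- the set of conditionally `ε`-typical output sequences for the channel `W`
and input word `xn` (note `n·W(z|x)·P_{x^n}(x) = W(z|x)·N(x|x^n)`) -/
noncomputable def condTypSet {X Z : Type*} [Fintype X] [Fintype Z]
    (W : X → Z → ℝ) {n : ℕ} (xn : Fin n → X) (ε : ℝ) : Finset (Fin n → Z) :=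
  univ.filter (fun zn => ∀ (x : X) (z : Z),
    |(Ncount2 xn zn x z : ℝ) - W x z * (Ncount xn x : ℝ)| ≤ ε * n ∧
    (W x z = 0 → Ncount2 xn zn x z = 0))

-- convexity bound: exp (l*w) ≤ 1 + (exp l - 1) * w for w ∈ [0,1]
lemma exp_mul_le (l w : ℝ) (hw0 : 0 ≤ w) (hw1 : w ≤ 1) :
    Real.exp (l * w) ≤ 1 + (Real.exp l - 1) * w := by
  have h := convexOn_exp.2 (Set.mem_univ (0:ℝ)) (Set.mem_univ l)
    (by linarith : (0:ℝ) ≤ 1 - w) hw0 (by ring)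
  simp only [smul_eq_mul, mul_zero, zero_add, Real.exp_zero] at h
  calc Real.exp (l * w) = Real.exp ((1-w) * 0 + w * l) := by ring_nf
    _ ≤ (1-w) * 1 + w * Real.exp l := by simpa [Real.exp_zero] using h
    _ = 1 + (Real.exp l - 1) * w := by ring

-- e^l - 1 - l ≤ (3/4) l^2 for |l| ≤ 1
lemma exp_sub_one_sub_le {l : ℝ} (hl : |l| ≤ 1) :
    Real.exp l - 1 - l ≤ (3/4) * l^2 := by
  have h := Real.exp_bound hl (by norm_num : 0 < 2)
  have h2 : ∑ m ∈ range 2, l ^ m / m.factorial = 1 + l := by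
    simp [Finset.sum_range_succ]
  rw [h2] at h
  have := (abs_sub_le_iff.1 h).1
  have hb : |l| ^ 2 * (2+1) / ((2:ℕ).factorial * 2) ≤ (3/4) * l^2 := by
    rw [sq_abs]; norm_num [Nat.factorial]; linarith
  have hb' : |l| ^ 2 * ((2:ℕ).succ / ((2:ℕ).factorial * 2)) ≤ (3/4) * l^2 := by
    rw [sq_abs]; norm_num [Nat.factorial]; linarith
  linarith

lemma tail_bound {Z : Type*} [Fintype Z] {n : ℕ}
    (q : Fin n → Z → ℝ) (hq0 : ∀ i z, 0 ≤ q i z) (hq1 : ∀ i, ∑ z, q i z = 1)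
    (w : Fin n → Z → ℝ) (hw0 : ∀ i z, 0 ≤ w i z) (hw1 : ∀ i z, w i z ≤ 1)
    (t l : ℝ) (hl0 : 0 ≤ l) (hl1 : l ≤ 1) :
    ∑ zn ∈ univ.filter (fun zn : Fin n → Z =>
        (∑ i, ∑ z, q i z * w i z) + t ≤ ∑ i, w i (zn i)),
      ∏ i, q i (zn i) ≤ Real.exp ((3/4) * l^2 * n - l * t) := by
  set μ : ℝ := ∑ i, ∑ z, q i z * w i z with hμ
  have hprodnn : ∀ zn : Fin n → Z, 0 ≤ ∏ i, q i (zn i) := fun zn =>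
    Finset.prod_nonneg (fun i _ => hq0 i (zn i))
  -- step 1: insert exp factor
  have step1 : ∑ zn ∈ univ.filter (fun zn : Fin n → Z => μ + t ≤ ∑ i, w i (zn i)),
      ∏ i, q i (zn i) ≤
      ∑ zn : Fin n → Z, Real.exp (l * ((∑ i, w i (zn i)) - μ - t)) * ∏ i, q i (zn i) := by
    have s1 : ∑ zn ∈ univ.filter (fun zn : Fin n → Z => μ + t ≤ ∑ i, w i (zn i)),
        ∏ i, q i (zn i) ≤
        ∑ zn ∈ univ.filter (fun zn : Fin n → Z => μ + t ≤ ∑ i, w i (zn i)),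
          Real.exp (l * ((∑ i, w i (zn i)) - μ - t)) * ∏ i, q i (zn i) := by
      refine Finset.sum_le_sum (fun zn hzn => ?_)
      have h := (Finset.mem_filter.1 hzn).2
      have h1 : (1:ℝ) ≤ Real.exp (l * ((∑ i, w i (zn i)) - μ - t)) := by
        rw [← Real.exp_zero]
        exact Real.exp_le_exp.2 (by nlinarith)
      nlinarith [hprodnn zn]
    refine s1.trans (Finset.sum_le_sum_of_subset_of_nonneg (Finset.filter_subset _ _)
      (fun zn _ _ => ?_))
    have := hprodnn zn
    positivity
  -- step 2: factorize
  have hfac : ∀ zn : Fin n → Z, Real.exp (l * ((∑ i, w i (zn i)) - μ - t)) * ∏ i, q i (zn i)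
      = Real.exp (-l*(μ+t)) * ∏ i, (q i (zn i) * Real.exp (l * w i (zn i))) := by
    intro zn
    rw [Finset.prod_mul_distrib, ← Real.exp_sum]
    rw [show (l * ((∑ i, w i (zn i)) - μ - t)) = (-l*(μ+t)) + ∑ i, l * w i (zn i) by
      rw [← Finset.mul_sum]; ring]
    rw [Real.exp_add]; ring
  have step2 : ∑ zn : Fin n → Z, Real.exp (l * ((∑ i, w i (zn i)) - μ - t)) * ∏ i, q i (zn i)
      = Real.exp (-l * (μ + t)) * ∏ i, ∑ z, q i z * Real.exp (l * w i z) := by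
    rw [Finset.sum_congr rfl (fun zn _ => hfac zn), ← Finset.mul_sum]
    congr 1
    rw [← Finset.sum_prod_piFinset (univ : Finset Z)
      (fun i z => q i z * Real.exp (l * w i z)), Fintype.piFinset_univ]
  -- step 3: per-coordinate mgf bound
  have step3 : ∀ i, ∑ z, q i z * Real.exp (l * w i z) ≤
      Real.exp ((Real.exp l - 1) * ∑ z, q i z * w i z) := by
    intro i
    have h1 : ∑ z, q i z * Real.exp (l * w i z) ≤
        ∑ z, q i z * (1 + (Real.exp l - 1) * w i z) :=
      Finset.sum_le_sum fun z _ =>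
        mul_le_mul_of_nonneg_left (exp_mul_le l (w i z) (hw0 i z) (hw1 i z)) (hq0 i z)
    have h2 : ∑ z, q i z * (1 + (Real.exp l - 1) * w i z)
        = 1 + (Real.exp l - 1) * ∑ z, q i z * w i z := by
      rw [Finset.mul_sum]
      rw [show ∀ f g : Z → ℝ, (∑ z, (f z * (1 + (Real.exp l - 1) * g z))) =
        (∑ z, f z) + ∑ z, (Real.exp l - 1) * (f z * g z) from fun f g => by
          rw [← Finset.sum_add_distrib]; exact Finset.sum_congr rfl fun z _ => by ring]
      rw [hq1 i]
    have h3 := Real.add_one_le_exp ((Real.exp l - 1) * ∑ z, q i z * w i z)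
    linarith
  -- step 4: product bound
  have hrnn : ∀ i : Fin n, (0:ℝ) ≤ ∑ z, q i z * w i z := fun i =>
    Finset.sum_nonneg fun z _ => mul_nonneg (hq0 i z) (hw0 i z)
  have hr1 : ∀ i : Fin n, (∑ z, q i z * w i z) ≤ 1 := fun i => by
    calc ∑ z, q i z * w i z ≤ ∑ z, q i z :=
          Finset.sum_le_sum fun z _ => by nlinarith [hq0 i z, hw0 i z, hw1 i z]
      _ = 1 := hq1 i
  have step4 : ∏ i, ∑ z, q i z * Real.exp (l * w i z) ≤ Real.exp ((Real.exp l - 1) * μ) := by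
    calc ∏ i, ∑ z, q i z * Real.exp (l * w i z)
        ≤ ∏ i, Real.exp ((Real.exp l - 1) * ∑ z, q i z * w i z) := by
          refine Finset.prod_le_prod (fun i _ => ?_) (fun i _ => step3 i)
          exact Finset.sum_nonneg fun z _ =>
            mul_nonneg (hq0 i z) (Real.exp_nonneg _)
      _ = Real.exp ((Real.exp l - 1) * μ) := by
          rw [← Real.exp_sum, hμ, Finset.mul_sum]
  -- conclude
  have hμn : μ ≤ n := by
    calc μ ≤ ∑ _i : Fin n, (1:ℝ) := Finset.sum_le_sum fun i _ => hr1 i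
      _ = n := by simp
  have hμ0 : 0 ≤ μ := Finset.sum_nonneg fun i _ => hrnn i
  have hquad := exp_sub_one_sub_le (abs_le.2 ⟨by linarith, hl1⟩)
  have hfinal : Real.exp (-l * (μ + t)) * Real.exp ((Real.exp l - 1) * μ) ≤
      Real.exp ((3/4) * l^2 * n - l * t) := by
    rw [← Real.exp_add]
    refine Real.exp_le_exp.2 ?_
    nlinarith [Real.add_one_le_exp l]
  calc _ ≤ _ := step1
    _ = _ := step2
    _ ≤ _ := mul_le_mul_of_nonneg_left step4 (Real.exp_nonneg _) |>.trans hfinal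



set_option maxHeartbeats 2000000 in
/-- Lemma on distinct types: if the output distributions of `W` are uniformly `η`-far
(in `ℓ₁`) from the convex hulls of the others, and `d_H(x^n,y^n) ≥ σn`, then
`W^n_{y^n}(T^n_{W,ε}(x^n)) ≤ 2·2^(-nε⁴/2)` for `ε = σ²η/(2|X|²|Z|)`. -/
theorem distinct_types_lemma {X Z : Type*} [Fintype X] [Fintype Z]
    (W : X → Z → ℝ) (hW0 : ∀ x z, 0 ≤ W x z) (hW1 : ∀ x, ∑ z, W x z = 1)
    (η : ℝ) (hη : 0 < η) (σ : ℝ) (hσ : 0 < σ)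
    (hsep : ∀ (x : X) (P : X → ℝ), (∀ y, 0 ≤ P y) → (∑ y, P y = 1) → P x = 0 →
      η ≤ ∑ z, |W x z - ∑ y, P y * W y z|)
    (n : ℕ) (xn yn : Fin n → X)
    (hdist : σ * n ≤ ((univ.filter (fun i => xn i ≠ yn i)).card : ℝ))
    (ε : ℝ) (hε : ε = σ ^ 2 * η / (2 * (Fintype.card X : ℝ) ^ 2 * (Fintype.card Z : ℝ))) :
    (∑ zn ∈ condTypSet W xn ε, ∏ i, W (yn i) (zn i)) ≤
      2 * (2 : ℝ) ^ (-(n : ℝ) * ε ^ 4 / 2) := by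
  -- trivial case n = 0
  rcases Nat.eq_zero_or_pos n with hn | hn
  · subst hn
    have h1 : (∑ zn ∈ condTypSet W xn ε, ∏ i, W (yn i) (zn i)) ≤ 1 := by
      calc (∑ zn ∈ condTypSet W xn ε, ∏ i, W (yn i) (zn i))
          = ((condTypSet W xn ε).card : ℝ) := by
            rw [Finset.sum_congr rfl (fun zn _ => by
              simp : ∀ zn ∈ condTypSet W xn ε, (∏ i, W (yn i) (zn i)) = 1)]
            simp
        _ ≤ ((univ : Finset (Fin 0 → Z)).card : ℝ) := by
            exact_mod_cast Finset.card_le_card (Finset.filter_subset _ _)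
        _ = 1 := by simp
    have h2 : (1:ℝ) ≤ 2 * (2 : ℝ) ^ (-(0:ℕ) * ε ^ 4 / 2) := by
      norm_num
    exact h1.trans h2
  -- Z empty case
  rcases isEmpty_or_nonempty Z with hZ | hZ
  · have hE : IsEmpty (Fin n → Z) := ⟨fun f => (hZ.false (f ⟨0, hn⟩))⟩
    have : condTypSet W xn ε = ∅ := Finset.eq_empty_of_isEmpty _
    rw [this]
    simp only [Finset.sum_empty]
    positivity
  -- main case: n ≥ 1, Z nonempty
  set K : ℝ := (Fintype.card X : ℝ) with hK
  set L : ℝ := (Fintype.card Z : ℝ) with hL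
  have hL1 : (1:ℝ) ≤ L := by
    rw [hL]; exact_mod_cast Fintype.card_pos
  -- a disagreeing position
  set D : Finset (Fin n) := univ.filter (fun i => xn i ≠ yn i) with hD
  have hdpos : (0:ℝ) < (D.card : ℝ) := by
    refine lt_of_lt_of_le ?_ hdist
    positivity
  have hDne : D.Nonempty := Finset.card_pos.1 (by exact_mod_cast hdpos)
  obtain ⟨i₀, hi₀⟩ := hDne
  have hxyne : xn i₀ ≠ yn i₀ := (Finset.mem_filter.1 hi₀).2
  have : Nonempty X := ⟨xn i₀⟩
  have hK2 : (2:ℝ) ≤ K := by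
    rw [hK]
    exact_mod_cast Fintype.one_lt_card_iff.2 ⟨xn i₀, yn i₀, hxyne⟩
  -- η ≤ 2
  have hη2 : η ≤ 2 := by
    have h := hsep (xn i₀) (fun y => if y = yn i₀ then 1 else 0)
      (fun y => by positivity) (by simp) (by simp [hxyne])
    have h2 : ∀ z, (∑ y, (if y = yn i₀ then (1:ℝ) else 0) * W y z) = W (yn i₀) z := by
      intro z; simp [ite_mul]
    rw [Finset.sum_congr rfl (fun z _ => by rw [h2 z])] at h
    calc η ≤ ∑ z, |W (xn i₀) z - W (yn i₀) z| := h
      _ ≤ ∑ z, (W (xn i₀) z + W (yn i₀) z) := Finset.sum_le_sum (fun z _ => by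
          have := hW0 (xn i₀) z; have := hW0 (yn i₀) z
          rw [abs_sub_le_iff]; constructor <;> linarith)
      _ = 2 := by rw [Finset.sum_add_distrib, hW1, hW1]; norm_num
  -- σ ≤ 1
  have hDn : (D.card : ℝ) ≤ n := by
    exact_mod_cast Finset.card_le_card (Finset.subset_univ D) |>.trans (le_of_eq (by simp))
  have hσ1 : σ ≤ 1 := by
    have hn1 : (1:ℝ) ≤ n := by exact_mod_cast hn
    nlinarith
  -- ε bounds
  have hεpos : 0 < ε := by
    rw [hε]
    exact div_pos (mul_pos (pow_pos hσ 2) hη) (by nlinarith)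
  have hε14 : ε ≤ 1/4 := by
    rw [hε]
    have h8 : (8:ℝ) ≤ 2 * K^2 * L := by nlinarith
    have hnum : σ^2 * η ≤ 2 := by nlinarith
    calc σ^2*η / (2*K^2*L) ≤ 2 / 8 :=
        div_le_div₀ (by norm_num) hnum (by norm_num) h8
      _ ≤ 1/4 := by norm_num
  -- choose x*
  have hfib : (D.card : ℝ) = ∑ x : X, ((D.filter (fun i => xn i = x)).card : ℝ) := by
    have h := Finset.card_eq_sum_card_fiberwise
      (s := D) (t := univ) (f := xn) (fun i _ => Finset.mem_univ (xn i))
    exact_mod_cast congrArg (Nat.cast : ℕ → ℝ) h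
  obtain ⟨xs, _, hxs⟩ : ∃ x ∈ univ, (D.card:ℝ)/K ≤ ((D.filter (fun i => xn i = x)).card : ℝ) := by
    refine Finset.exists_le_of_sum_le Finset.univ_nonempty ?_
    rw [← hfib, Finset.sum_const, Finset.card_univ, nsmul_eq_mul, ← hK]
    rw [mul_div_cancel₀]
    linarith
  set B : Finset (Fin n) := D.filter (fun i => xn i = xs) with hB
  have hdspos : (0:ℝ) < (B.card : ℝ) := by
    refine lt_of_lt_of_le ?_ hxs
    positivity
  -- the distribution P
  set P : X → ℝ := fun y => ((B.filter (fun i => yn i = y)).card : ℝ) / B.card with hP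
  have hPsum : ∑ y, P y = 1 := by
    rw [hP, ← Finset.sum_div]
    rw [show ∑ y : X, ((B.filter (fun i => yn i = y)).card:ℝ) = (B.card:ℝ) by
      exact_mod_cast congrArg Nat.cast
        (Finset.card_eq_sum_card_fiberwise (fun i _ => Finset.mem_univ (yn i))).symm]
    rw [div_self (ne_of_gt hdspos)]
  have hPxs : P xs = 0 := by
    rw [hP]
    have : B.filter (fun i => yn i = xs) = ∅ := by
      refine Finset.filter_eq_empty_iff.2 ?_
      intro i hi hyn
      exact (Finset.mem_filter.1 (Finset.mem_filter.1 hi).1).2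
        (((Finset.mem_filter.1 hi).2).trans hyn.symm)
    simp [this]
  -- choose z*
  have hsep2 := hsep xs P (fun y => by rw [hP]; positivity) hPsum hPxs
  obtain ⟨zs, _, hzs⟩ : ∃ z ∈ univ, η/L ≤ |W xs z - ∑ y, P y * W y z| := by
    refine Finset.exists_le_of_sum_le Finset.univ_nonempty ?_
    rw [Finset.sum_const, Finset.card_univ, nsmul_eq_mul, ← hL,
      mul_div_cancel₀ _ (by linarith : L ≠ 0)]
    exact hsep2
  set A : Finset (Fin n) := univ.filter (fun i => xn i = xs) with hA
  have hBA : B ⊆ A := fun i hi =>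
    Finset.mem_filter.2 ⟨Finset.mem_univ _, (Finset.mem_filter.1 hi).2⟩
  set Q : ℝ := ∑ y, P y * W y zs with hQ
  set μA : ℝ := ∑ i ∈ A, W (yn i) zs with hμA
  have hBne : (B.card:ℝ) ≠ 0 := ne_of_gt hdspos
  -- key identity
  have hkey : μA - W xs zs * A.card = (B.card : ℝ) * (Q - W xs zs) := by
    have h1 : ∀ i ∈ A \ B, W (yn i) zs = W xs zs := by
      intro i hi
      obtain ⟨hiA, hiB⟩ := Finset.mem_sdiff.1 hi
      have hxi : xn i = xs := (Finset.mem_filter.1 hiA).2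
      have hnd : ¬ (xn i ≠ yn i) := fun hne =>
        hiB (Finset.mem_filter.2 ⟨Finset.mem_filter.2 ⟨Finset.mem_univ _, hne⟩, hxi⟩)
      rw [(not_not.1 hnd).symm.trans hxi]
    have h1' : ∑ i ∈ A \ B, W (yn i) zs = ((A.card : ℝ) - B.card) * W xs zs := by
      rw [Finset.sum_congr rfl h1, Finset.sum_const, nsmul_eq_mul, Finset.card_sdiff_of_subset hBA,
        Nat.cast_sub (Finset.card_le_card hBA)]
    have h2 : ∑ i ∈ B, W (yn i) zs = (B.card : ℝ) * Q := by
      have hfib2 : ∑ i ∈ B, W (yn i) zs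
          = ∑ y : X, ∑ i ∈ B.filter (fun i => yn i = y), W (yn i) zs :=
        (Finset.sum_fiberwise_of_maps_to (fun i _ => Finset.mem_univ (yn i)) _).symm
      rw [hfib2, hQ, Finset.mul_sum]
      refine Finset.sum_congr rfl (fun y _ => ?_)
      rw [Finset.sum_congr rfl (fun i hi => by
          rw [(Finset.mem_filter.1 hi).2]
            : ∀ i ∈ B.filter (fun i => yn i = y), W (yn i) zs = W y zs),
        Finset.sum_const, nsmul_eq_mul, hP]
      field_simp
    have hsum := Finset.sum_sdiff (f := fun i => W (yn i) zs) hBA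
    rw [h1', h2] at hsum
    rw [hμA] at *
    linear_combination hsum.symm
  -- key bound
  have hkey2 : 2*ε*(n:ℝ) ≤ |μA - W xs zs * (A.card:ℝ)| := by
    rw [hkey, abs_mul, abs_of_pos hdspos]
    have h3 : η / L ≤ |Q - W xs zs| := by rw [abs_sub_comm]; exact hzs
    have h4 : σ * n / K ≤ (B.card:ℝ) := by
      refine le_trans ?_ hxs
      apply div_le_div_of_nonneg_right hdist (by linarith) |>.trans (le_refl _)
    have hKpos : (0:ℝ) < K := by linarith
    have hLpos : (0:ℝ) < L := by linarith
    have e1 : 2 * ε * (n:ℝ) = (σ/K) * ((σ*n/K)*(η/L)) := by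
      rw [hε]; field_simp
    have e2 : (σ/K) * ((σ*n/K)*(η/L)) ≤ 1 * ((σ*n/K)*(η/L)) := by
      apply mul_le_mul_of_nonneg_right
      · rw [div_le_one hKpos]; linarith
      · have hn0 : (0:ℝ) ≤ (n:ℝ) := Nat.cast_nonneg n
        positivity
    have e3 : (σ*n/K)*(η/L) ≤ (B.card:ℝ) * |Q - W xs zs| := by
      refine mul_le_mul h4 h3 (by positivity) (le_of_lt hdspos)
    linarith
  -- set up the two tail events
  set q : Fin n → Z → ℝ := fun i z => W (yn i) z with hq
  set wp : Fin n → Z → ℝ := fun i z => if xn i = xs ∧ z = zs then 1 else 0 with hwp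
  set wm : Fin n → Z → ℝ := fun i z => if xn i = xs ∧ z ≠ zs then 1 else 0 with hwm
  -- counting identities
  have hcount_p : ∀ zn : Fin n → Z, ∑ i, wp i (zn i) = (Ncount2 xn zn xs zs : ℝ) := by
    intro zn
    rw [Ncount2, Finset.card_filter]
    push_cast
    rfl
  have hcount_m : ∀ zn : Fin n → Z,
      ∑ i, wm i (zn i) = (A.card : ℝ) - (Ncount2 xn zn xs zs : ℝ) := by
    intro zn
    have hnat : (univ.filter (fun i => xn i = xs ∧ zn i = zs)).card
        + (univ.filter (fun i => xn i = xs ∧ zn i ≠ zs)).card = A.card := by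
      rw [hA, ← Finset.filter_filter, ← Finset.filter_filter]
      exact Finset.card_filter_add_card_filter_not (p := fun i => zn i = zs)
    have h1 : ∑ i, wm i (zn i)
        = ((univ.filter (fun i => xn i = xs ∧ zn i ≠ zs)).card : ℝ) := by
      rw [Finset.card_filter]; push_cast; rfl
    rw [h1, Ncount2]
    have := congrArg (Nat.cast : ℕ → ℝ) hnat
    push_cast at this
    linarith
  -- mean identities
  have hmean_p : ∑ i, ∑ z, q i z * wp i z = μA := by
    have inner : ∀ i, ∑ z, q i z * wp i z = if xn i = xs then W (yn i) zs else 0 := by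
      intro i
      by_cases h : xn i = xs <;>
        simp [hwp, hq, h, mul_ite, Finset.sum_ite_eq']
    rw [Finset.sum_congr rfl (fun i _ => inner i), hμA, Finset.sum_filter]
  have hmean_m : ∑ i, ∑ z, q i z * wm i z = (A.card:ℝ) - μA := by
    have inner : ∀ i, ∑ z, q i z * wm i z = if xn i = xs then 1 - W (yn i) zs else 0 := by
      intro i
      by_cases h : xn i = xs
      · have e : ∀ z, q i z * wm i z = W (yn i) z - (if z = zs then W (yn i) z else 0) := by
          intro z
          by_cases hz : z = zs <;> simp [hwm, hq, h, hz]
        rw [Finset.sum_congr rfl (fun z _ => e z), Finset.sum_sub_distrib, hW1,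
          Finset.sum_ite_eq' univ zs (fun z => W (yn i) z), if_pos (Finset.mem_univ zs), if_pos h]
      · simp [hwm, hq, h]
    rw [Finset.sum_congr rfl (fun i _ => inner i), ← Finset.sum_filter]
    rw [Finset.sum_sub_distrib, Finset.sum_const, nsmul_eq_mul, mul_one, hμA, hA]
  -- the inclusion into the two tails
  have hincl : condTypSet W xn ε ⊆
      (univ.filter (fun zn : Fin n → Z =>
        (∑ i, ∑ z, q i z * wp i z) + ε*n ≤ ∑ i, wp i (zn i))) ∪
      (univ.filter (fun zn : Fin n → Z =>
        (∑ i, ∑ z, q i z * wm i z) + ε*n ≤ ∑ i, wm i (zn i))) := by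
    intro zn hzn
    simp only [condTypSet, Finset.mem_filter, Finset.mem_univ, true_and] at hzn
    have hspec := (hzn xs zs).1
    have hNA : (Ncount xn xs : ℝ) = (A.card : ℝ) := by rw [Ncount, hA]
    rw [hNA] at hspec
    have habs := abs_le.1 hspec
    rcases le_or_gt μA (W xs zs * (A.card:ℝ)) with hc | hc
    · -- lower: N2 ≥ μA + εn, belongs to wp-tail
      refine Finset.mem_union_left _ (Finset.mem_filter.2 ⟨Finset.mem_univ _, ?_⟩)
      rw [hcount_p zn, hmean_p]
      have : |μA - W xs zs * (A.card:ℝ)| = W xs zs * (A.card:ℝ) - μA := by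
        rw [abs_sub_comm, abs_of_nonneg (by linarith)]
      rw [this] at hkey2
      linarith
    · refine Finset.mem_union_right _ (Finset.mem_filter.2 ⟨Finset.mem_univ _, ?_⟩)
      rw [hcount_m zn, hmean_m]
      have : |μA - W xs zs * (A.card:ℝ)| = μA - W xs zs * (A.card:ℝ) := by
        rw [abs_of_nonneg (by linarith)]
      rw [this] at hkey2
      linarith
  -- apply the tail bounds
  have hq0 : ∀ i z, 0 ≤ q i z := fun i z => hW0 _ _
  have hq1 : ∀ i, ∑ z, q i z = 1 := fun i => hW1 _
  have hwp0 : ∀ i z, 0 ≤ wp i z := by intro i z; simp only [hwp]; split <;> norm_num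
  have hwp1 : ∀ i z, wp i z ≤ 1 := by intro i z; simp only [hwp]; split <;> norm_num
  have hwm0 : ∀ i z, 0 ≤ wm i z := by intro i z; simp only [hwm]; split <;> norm_num
  have hwm1 : ∀ i z, wm i z ≤ 1 := by intro i z; simp only [hwm]; split <;> norm_num
  have hl0 : (0:ℝ) ≤ ε/3 := by linarith
  have hl1 : ε/3 ≤ 1 := by linarith
  have tailp := tail_bound q hq0 hq1 wp hwp0 hwp1 (ε*n) (ε/3) hl0 hl1
  have tailm := tail_bound q hq0 hq1 wm hwm0 hwm1 (ε*n) (ε/3) hl0 hl1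
  have hprodnn : ∀ zn : Fin n → Z, 0 ≤ ∏ i, q i (zn i) := fun zn =>
    Finset.prod_nonneg (fun i _ => hq0 i (zn i))
  have hsum1 : ∑ zn ∈ condTypSet W xn ε, ∏ i, q i (zn i) ≤
      2 * Real.exp ((3/4) * (ε/3)^2 * n - (ε/3) * (ε*n)) := by
    have h1 : ∑ zn ∈ condTypSet W xn ε, ∏ i, q i (zn i) ≤
        ∑ zn ∈ ((univ.filter (fun zn : Fin n → Z =>
          (∑ i, ∑ z, q i z * wp i z) + ε*n ≤ ∑ i, wp i (zn i))) ∪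
        (univ.filter (fun zn : Fin n → Z =>
          (∑ i, ∑ z, q i z * wm i z) + ε*n ≤ ∑ i, wm i (zn i)))), ∏ i, q i (zn i) :=
      Finset.sum_le_sum_of_subset_of_nonneg hincl (fun zn _ _ => hprodnn zn)
    have h2 := Finset.sum_union_inter
      (s₁ := univ.filter (fun zn : Fin n → Z =>
          (∑ i, ∑ z, q i z * wp i z) + ε*n ≤ ∑ i, wp i (zn i)))
      (s₂ := univ.filter (fun zn : Fin n → Z =>
          (∑ i, ∑ z, q i z * wm i z) + ε*n ≤ ∑ i, wm i (zn i)))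
      (f := fun zn => ∏ i, q i (zn i))
    have h3 : 0 ≤ ∑ zn ∈ ((univ.filter (fun zn : Fin n → Z =>
          (∑ i, ∑ z, q i z * wp i z) + ε*n ≤ ∑ i, wp i (zn i))) ∩
        (univ.filter (fun zn : Fin n → Z =>
          (∑ i, ∑ z, q i z * wm i z) + ε*n ≤ ∑ i, wm i (zn i)))), ∏ i, q i (zn i) :=
      Finset.sum_nonneg (fun zn _ => hprodnn zn)
    linarith [tailp, tailm, h1, h2, h3]
  -- final numeric comparison
  rw [show ∀ r : ℝ, (2:ℝ) ^ r = Real.exp (Real.log 2 * r) from fun r => by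
    rw [Real.rpow_def_of_pos (by norm_num : (0:ℝ) < 2)]]
  refine hsum1.trans ?_
  have hlog := Real.log_two_lt_d9.le
  have hlog0 := Real.log_nonneg (by norm_num : (1:ℝ) ≤ 2)
  have hn0 : (0:ℝ) ≤ (n:ℝ) := Nat.cast_nonneg n
  have hε2 : ε^2 ≤ 1/16 := by nlinarith
  have key : Real.log 2 * ε^2 ≤ 1/2 := by nlinarith
  have key2 : Real.log 2 * (-(n:ℝ) * ε^4 / 2) ≥ (3/4) * (ε/3)^2 * n - (ε/3) * (ε*n) := by
    have h := mul_le_mul_of_nonneg_right key (mul_nonneg hn0 (sq_nonneg ε))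
    nlinarith [h]
  have := Real.exp_le_exp.2 key2
  linarith [mul_le_mul_of_nonneg_left this (by norm_num : (0:ℝ) ≤ 2)]
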